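/- For any stable normalized Bessel sequence {g_n}_{n≥0} there exists a unique admissible sequence {e_n}_{n≥0} of unit vectors (i.e., with ⟨e_n, e_{n+1}⟩ ≥ 0 for all n) such that g_0 = e_0 and g_n = e_n - ∑_{i<n} ⟨e_n, e_i⟩ g_i; moreover this sequence {e_n} is stable. -/

import Mathlib

/-!
Write `Q_n x = x - ∑_{k<n} ⟪g_k, x⟫ e_k` and `A_n y = y - ∑_{k<n} ⟪e_k, y⟫ g_k` for its
adjoint, so that the Kaczmarz relation reads `A_n e_n = g_n`. Once it holds at `n` and
`‖e_n‖ = 1`, `Q_{n+1} = (1 - e_n e_n^*) Q_n`, hence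
`‖Q_{n+1} x‖² = ‖Q_n x‖² - |⟪g_n, x⟫|²` and the Bessel inequality gives
`|⟪g_{n+1}, x⟫| ≤ ‖Q_{n+1} x‖`. By Hahn–Banach and Riesz, `Q_{n+1} x ↦ ⟪g_{n+1}, x⟫` is
represented by some `u` with `‖u‖ ≤ 1`, i.e. `A_{n+1} u = g_{n+1}`; since `A_{n+1} e_n = 0`,
adding the right multiple of `e_n` gives a unit `e_{n+1}` with `⟪e_n, e_{n+1}⟫ ≥ 0`.

Stability of `(g_n)` forces `ker Q_m ⊆ ℂ e_0` for `m ≥ 1`. As `Q_m` is the identity plus an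
operator of finite rank, a dimension count on a finite-dimensional invariant subspace gives
`range Q_{n+1} + ℂ e_n = H`, i.e. `ker A_{n+1} = ℂ e_n`. Hence two solutions can differ at
step `n + 1` only by a multiple of `e_n`, which the normalisation and the sign condition rule
out. And a vector `z` orthogonal to all `e_k`, `k ≥ N`, is some `Q_{N+1} x`; then
`Q_j x = z` and `⟪g_j, x⟫ = ⟪e_j, z⟫ = 0` for all `j > N`, so `x ∈ ℂ e_0` and `z = 0`.
-/

open scoped InnerProductSpace
open Finset

open Module in
theorem Submodule.map_sup_span_singleton_eq_of_ker_le {K V : Type*} [DivisionRing K]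
    [AddCommGroup V] [Module K V] {U : Submodule K V} [FiniteDimensional K U]
    {T : V →ₗ[K] V} (hTU : U.map T ≤ U) {e₀ e : V} (hker : LinearMap.ker T ≤ K ∙ e₀)
    (heU : e ∈ U) (he : e ∉ U.map T) : U.map T ⊔ K ∙ e = U := by
  have hker_le : finrank K (LinearMap.ker (T.domRestrict U)) ≤ 1 := by
    rw [← Submodule.finrank_map_subtype_eq]
    refine (Submodule.finrank_mono ((Submodule.map_comap_le _ _).trans hker)).trans ?_
    simpa using finrank_span_le_card (R := K) ({e₀} : Set V)
  have hrank := LinearMap.finrank_range_add_finrank_ker (T.domRestrict U)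
  rw [LinearMap.range_domRestrict] at hrank
  have hdisj : U.map T ⊓ K ∙ e = ⊥ := by
    rw [eq_bot_iff]
    rintro _ ⟨hxT, hxe⟩
    obtain ⟨c, rfl⟩ := Submodule.mem_span_singleton.mp hxe
    rcases eq_or_ne c 0 with rfl | hc
    · simp
    · exact absurd (by simpa [smul_smul, inv_mul_cancel₀ hc] using (U.map T).smul_mem c⁻¹ hxT) he
  have he0 : e ≠ 0 := fun h => he (h ▸ Submodule.zero_mem _)
  have hsup := Submodule.finrank_sup_add_finrank_inf_eq (U.map T) (K ∙ e)
  rw [hdisj, finrank_bot, finrank_span_singleton he0] at hsup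
  exact Submodule.eq_of_le_of_finrank_le
    (sup_le hTU ((Submodule.span_singleton_le_iff_mem _ _).mpr heU)) (by omega)

theorem exists_norm_le_one_inner_apply_eq {𝕜 E F : Type*} [RCLike 𝕜] [AddCommGroup E]
    [Module 𝕜 E] [NormedAddCommGroup F] [InnerProductSpace 𝕜 F] [CompleteSpace F]
    (T : E →ₗ[𝕜] F) (ψ : E →ₗ[𝕜] 𝕜) (hψ : ∀ x, ‖ψ x‖ ≤ ‖T x‖) :
    ∃ u : F, ‖u‖ ≤ 1 ∧ ∀ x, ⟪u, T x⟫_𝕜 = ψ x := by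
  have hker : LinearMap.ker T ≤ LinearMap.ker ψ := fun x hx => by
    simpa [LinearMap.mem_ker.mp hx] using hψ x
  let ρ : LinearMap.range T →ₗ[𝕜] 𝕜 :=
    (LinearMap.ker T).liftQ ψ hker ∘ₗ T.quotKerEquivRange.symm.toLinearMap
  have hρ : ∀ x, ρ ⟨T x, LinearMap.mem_range_self T x⟩ = ψ x := fun x => by
    simp only [ρ, LinearMap.comp_apply, LinearEquiv.coe_coe,
      LinearMap.quotKerEquivRange_symm_apply_image, Submodule.mkQ_apply, Submodule.liftQ_apply]
  have hρ_le : ∀ y, ‖ρ y‖ ≤ 1 * ‖y‖ := by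
    rintro ⟨_, x, rfl⟩
    simpa [hρ] using hψ x
  obtain ⟨φ, hφρ, hφ⟩ := exists_extension_norm_eq _ (ρ.mkContinuous 1 hρ_le)
  refine ⟨(InnerProductSpace.toDual 𝕜 F).symm φ, ?_, fun x => ?_⟩
  · rw [LinearIsometryEquiv.norm_map, hφ]
    exact LinearMap.mkContinuous_norm_le _ zero_le_one hρ_le
  · rw [InnerProductSpace.toDual_symm_apply]
    exact (hφρ ⟨T x, LinearMap.mem_range_self T x⟩).trans (hρ x)

section UnitVector

variable {𝕜 E : Type*} [RCLike 𝕜] [NormedAddCommGroup E] [InnerProductSpace 𝕜 E]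
  {e : E}

theorem inner_sub_inner_smul_self_eq_zero (he : ‖e‖ = 1) (y : E) :
    ⟪e, y - ⟪e, y⟫_𝕜 • e⟫_𝕜 = 0 := by
  rw [inner_sub_right, inner_smul_right, inner_self_eq_norm_sq_to_K, he]
  simp

theorem norm_sub_inner_smul_sq (he : ‖e‖ = 1) (y : E) :
    ‖y - ⟪e, y⟫_𝕜 • e‖ ^ 2 = ‖y‖ ^ 2 - ‖⟪e, y⟫_𝕜‖ ^ 2 := by
  have hperp : ⟪y - ⟪e, y⟫_𝕜 • e, ⟪e, y⟫_𝕜 • e⟫_𝕜 = 0 := by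
    rw [inner_smul_right, inner_eq_zero_symm.mp (inner_sub_inner_smul_self_eq_zero he y),
      mul_zero]
  have := @norm_add_sq 𝕜 _ _ _ _ (y - ⟪e, y⟫_𝕜 • e) (⟪e, y⟫_𝕜 • e)
  rw [sub_add_cancel, hperp, norm_smul, he, mul_one] at this
  simp only [map_zero, mul_zero, add_zero] at this
  linarith

theorem exists_norm_add_smul_eq_one (he : ‖e‖ = 1) {u : E} (hu : ‖u‖ ≤ 1) :
    ∃ c : 𝕜, ‖u + c • e‖ = 1 ∧ ∃ r : ℝ, 0 ≤ r ∧ ⟪e, u + c • e⟫_𝕜 = r := by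
  set f := u - ⟪e, u⟫_𝕜 • e
  set s := √(1 - ‖f‖ ^ 2)
  have hf : ‖f‖ ^ 2 ≤ 1 := by
    nlinarith [norm_sub_inner_smul_sq (𝕜 := 𝕜) he u, norm_nonneg u, norm_nonneg ⟪e, u⟫_𝕜]
  have hfe : ⟪e, f⟫_𝕜 = 0 := inner_sub_inner_smul_self_eq_zero he u
  have hsum : u + (-⟪e, u⟫_𝕜 + s) • e = f + (s : 𝕜) • e := by
    rw [add_smul, neg_smul, ← add_assoc, ← sub_eq_add_neg]
  refine ⟨-⟪e, u⟫_𝕜 + s, ?_, s, Real.sqrt_nonneg _, ?_⟩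
  · have hperp : ⟪f, (s : 𝕜) • e⟫_𝕜 = 0 := by
      rw [inner_smul_right, ← inner_conj_symm, hfe, map_zero, mul_zero]
    have h := @norm_add_sq 𝕜 _ _ _ _ f ((s : 𝕜) • e)
    rw [hperp, norm_smul, he, mul_one, RCLike.norm_ofReal, sq_abs, Real.sq_sqrt (by linarith),
      ← hsum] at h
    simp only [map_zero, mul_zero, add_zero, add_sub_cancel] at h
    exact (pow_eq_one_iff_of_nonneg (norm_nonneg _) two_ne_zero).mp h
  · rw [hsum, inner_add_right, hfe, inner_smul_right, inner_self_eq_norm_sq_to_K, he]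
    simp

theorem eq_of_sub_eq_smul_of_inner_nonneg (he : ‖e‖ = 1) {v w : E} (hvw : ‖v‖ = ‖w‖)
    {c : 𝕜} (hc : v - w = c • e) {r r' : ℝ} (hr : 0 ≤ r) (hr' : 0 ≤ r')
    (hv : ⟪e, v⟫_𝕜 = r) (hw : ⟪e, w⟫_𝕜 = r') : v = w := by
  have hee : ⟪e, e⟫_𝕜 = 1 := by simp [inner_self_eq_norm_sq_to_K, he]
  have hc' : c = r - r' := by
    have := congrArg (⟪e, ·⟫_𝕜) hc
    simp only [inner_sub_right, inner_smul_right, hee, hv, hw, mul_one] at this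
    exact this.symm
  have hperp : v - ⟪e, v⟫_𝕜 • e = w - ⟪e, w⟫_𝕜 • e := by
    rw [hv, hw, sub_eq_sub_iff_sub_eq_sub, hc, hc', sub_smul]
  have hsq := norm_sub_inner_smul_sq (𝕜 := 𝕜) he v
  rw [hperp, norm_sub_inner_smul_sq he, hvw, hv, hw, RCLike.norm_ofReal,
    RCLike.norm_ofReal, abs_of_nonneg hr, abs_of_nonneg hr'] at hsq
  have hrr : r = r' := by nlinarith
  rw [← sub_eq_zero, hc, hc', hrr, sub_self, zero_smul]

end UnitVector

theorem eq_zero_of_forall_inner_eq_zero_of_dense {𝕜 E : Type*} [RCLike 𝕜]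
    [NormedAddCommGroup E] [InnerProductSpace 𝕜 E] [CompleteSpace E] {s : Set E}
    (hs : (Submodule.span 𝕜 s).topologicalClosure = ⊤) {x : E} (hx : ∀ v ∈ s, ⟪v, x⟫_𝕜 = 0) :
    x = 0 := by
  have h : 𝕜 ∙ x ≤ (Submodule.span 𝕜 s)ᗮ :=
    Submodule.isOrtho_iff_le.mp (Submodule.isOrtho_span.mpr fun u hu v hv => by
      rw [Set.mem_singleton_iff.mp hu]; exact inner_eq_zero_symm.mp (hx v hv))
  rwa [Submodule.topologicalClosure_eq_top_iff.mp hs, le_bot_iff,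
    Submodule.span_singleton_eq_bot] at h

namespace Kaczmarz

variable {𝕜 E : Type*} [RCLike 𝕜] [NormedAddCommGroup E] [InnerProductSpace 𝕜 E]
  {g e : ℕ → E} {n : ℕ}

variable (𝕜) in
/-- The operator `Q_n` above. Under the Kaczmarz relation it factors as
`(1 - e_{n-1} e_{n-1}^*) ⋯ (1 - e_0 e_0^*)`, the error operator of `n` Kaczmarz steps. -/
def residual (g e : ℕ → E) (n : ℕ) : E →ₗ[𝕜] E :=
  LinearMap.id - ∑ k ∈ range n, (innerₛₗ 𝕜 (g k)).smulRight (e k)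

variable (𝕜) in
def residualAdj (g e : ℕ → E) (n : ℕ) : E →ₗ[𝕜] E :=
  LinearMap.id - ∑ k ∈ range n, (innerₛₗ 𝕜 (e k)).smulRight (g k)

theorem residual_apply (x : E) :
    residual 𝕜 g e n x = x - ∑ k ∈ range n, ⟪g k, x⟫_𝕜 • e k := by
  simp [residual]

theorem residualAdj_apply (y : E) :
    residualAdj 𝕜 g e n y = y - ∑ k ∈ range n, ⟪e k, y⟫_𝕜 • g k := by
  simp [residualAdj]

theorem residual_succ_apply (x : E) :
    residual 𝕜 g e (n + 1) x = residual 𝕜 g e n x - ⟪g n, x⟫_𝕜 • e n := by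
  rw [residual_apply, residual_apply, sum_range_succ, sub_add_eq_sub_sub]

theorem residualAdj_succ_apply (y : E) :
    residualAdj 𝕜 g e (n + 1) y = residualAdj 𝕜 g e n y - ⟪e n, y⟫_𝕜 • g n := by
  rw [residualAdj_apply, residualAdj_apply, sum_range_succ, sub_add_eq_sub_sub]

theorem inner_residualAdj_left (y x : E) :
    ⟪residualAdj 𝕜 g e n y, x⟫_𝕜 = ⟪y, residual 𝕜 g e n x⟫_𝕜 := by
  simp only [residual_apply, residualAdj_apply, inner_sub_left, inner_sub_right, sum_inner,
    inner_sum, inner_smul_left, inner_smul_right, inner_conj_symm, mul_comm]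

theorem residualAdj_congr {e' : ℕ → E} (h : ∀ k < n, e k = e' k) :
    residualAdj 𝕜 g e n = residualAdj 𝕜 g e' n := by
  ext y
  simp only [residualAdj_apply]
  congr 1
  exact sum_congr rfl fun k hk => by rw [h k (mem_range.mp hk)]

theorem inner_eq_inner_residual (hrel : residualAdj 𝕜 g e n (e n) = g n) (x : E) :
    ⟪g n, x⟫_𝕜 = ⟪e n, residual 𝕜 g e n x⟫_𝕜 := by
  rw [← inner_residualAdj_left, hrel]

theorem residual_succ_apply_of_rel (hrel : residualAdj 𝕜 g e n (e n) = g n) (x : E) :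
    residual 𝕜 g e (n + 1) x =
      residual 𝕜 g e n x - ⟪e n, residual 𝕜 g e n x⟫_𝕜 • e n := by
  rw [residual_succ_apply, inner_eq_inner_residual hrel]

theorem inner_residual_succ_eq_zero (hrel : residualAdj 𝕜 g e n (e n) = g n) (he : ‖e n‖ = 1)
    (x : E) : ⟪e n, residual 𝕜 g e (n + 1) x⟫_𝕜 = 0 := by
  rw [residual_succ_apply_of_rel hrel]
  exact inner_sub_inner_smul_self_eq_zero he _

theorem norm_residual_succ_sq (hrel : residualAdj 𝕜 g e n (e n) = g n) (he : ‖e n‖ = 1)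
    (x : E) :
    ‖residual 𝕜 g e (n + 1) x‖ ^ 2 = ‖residual 𝕜 g e n x‖ ^ 2 - ‖⟪g n, x⟫_𝕜‖ ^ 2 := by
  rw [residual_succ_apply_of_rel hrel, norm_sub_inner_smul_sq he, inner_eq_inner_residual hrel]

theorem residualAdj_succ_apply_eq_zero (hrel : residualAdj 𝕜 g e n (e n) = g n)
    (he : ‖e n‖ = 1) : residualAdj 𝕜 g e (n + 1) (e n) = 0 := by
  rw [residualAdj_succ_apply, hrel, inner_self_eq_norm_sq_to_K, he]
  simp

theorem g_zero_eq (hrel : residualAdj 𝕜 g e 0 (e 0) = g 0) : g 0 = e 0 := by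
  simpa [residualAdj_apply] using hrel.symm

theorem forall_residualAdj_apply_self_eq_iff :
    (∀ n, residualAdj 𝕜 g e n (e n) = g n) ↔
      g 0 = e 0 ∧ ∀ n, 0 < n → g n = e n - ∑ i ∈ range n, ⟪e i, e n⟫_𝕜 • g i := by
  refine ⟨fun h => ⟨g_zero_eq (h 0), fun n _ => by rw [← h n, residualAdj_apply]⟩, ?_⟩
  rintro ⟨h0, h⟩ (_ | n)
  · simp [residualAdj_apply, h0]
  · rw [residualAdj_apply, h (n + 1) n.succ_pos]

theorem sum_norm_inner_sq_add_norm_residual_sq (hunit : ∀ k < n, ‖e k‖ = 1)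
    (hrel : ∀ k < n, residualAdj 𝕜 g e k (e k) = g k) (x : E) :
    ∑ k ∈ range n, ‖⟪g k, x⟫_𝕜‖ ^ 2 + ‖residual 𝕜 g e n x‖ ^ 2 = ‖x‖ ^ 2 := by
  induction n with
  | zero => simp [residual_apply]
  | succ n ih =>
    rw [sum_range_succ, norm_residual_succ_sq (hrel n n.lt_succ_self) (hunit n n.lt_succ_self),
      ← ih (fun k hk => hunit k (hk.trans n.lt_succ_self))
        (fun k hk => hrel k (hk.trans n.lt_succ_self))]
    ring

theorem norm_inner_le_norm_residual (hunit : ∀ k < n, ‖e k‖ = 1)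
    (hrel : ∀ k < n, residualAdj 𝕜 g e k (e k) = g k) {x : E}
    (hbessel : ∑ k ∈ range (n + 1), ‖⟪g k, x⟫_𝕜‖ ^ 2 ≤ ‖x‖ ^ 2) :
    ‖⟪g n, x⟫_𝕜‖ ≤ ‖residual 𝕜 g e n x‖ := by
  have h := sum_norm_inner_sq_add_norm_residual_sq hunit hrel x
  rw [sum_range_succ] at hbessel
  exact (sq_le_sq₀ (norm_nonneg _) (norm_nonneg _)).mp (by linarith)

variable (𝕜) in
def IsNext (g e : ℕ → E) (n : ℕ) (v : E) : Prop :=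
  ‖v‖ = 1 ∧ residualAdj 𝕜 g e (n + 1) v = g (n + 1) ∧ ∃ r : ℝ, 0 ≤ r ∧ ⟪e n, v⟫_𝕜 = r

theorem exists_isNext [CompleteSpace E]
    (hbessel : ∀ x (s : Finset ℕ), ∑ k ∈ s, ‖⟪g k, x⟫_𝕜‖ ^ 2 ≤ ‖x‖ ^ 2)
    (hunit : ∀ k ≤ n, ‖e k‖ = 1) (hrel : ∀ k ≤ n, residualAdj 𝕜 g e k (e k) = g k) :
    ∃ v, IsNext 𝕜 g e n v := by
  obtain ⟨u, hu, hinner⟩ := exists_norm_le_one_inner_apply_eq (residual 𝕜 g e (n + 1))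
    (innerₛₗ 𝕜 (g (n + 1))) fun x => norm_inner_le_norm_residual
      (fun k hk => hunit k (Nat.lt_succ_iff.mp hk)) (fun k hk => hrel k (Nat.lt_succ_iff.mp hk))
      (hbessel x _)
  have hAu : residualAdj 𝕜 g e (n + 1) u = g (n + 1) :=
    ext_inner_right 𝕜 fun x => by rw [inner_residualAdj_left, hinner, innerₛₗ_apply_apply]
  obtain ⟨c, hv, hpos⟩ := exists_norm_add_smul_eq_one (𝕜 := 𝕜) (hunit n le_rfl) hu
  refine ⟨u + c • e n, hv, ?_, hpos⟩
  rw [map_add, map_smul, hAu, residualAdj_succ_apply_eq_zero (hrel n le_rfl) (hunit n le_rfl),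
    smul_zero, add_zero]

theorem isNext_congr {e' : ℕ → E} (h : ∀ k ≤ n, e k = e' k) :
    IsNext 𝕜 g e n = IsNext 𝕜 g e' n := by
  unfold IsNext
  rw [residualAdj_congr fun k hk => h k (Nat.lt_succ_iff.mp hk), h n le_rfl]

-- The prefix is cut off at `n` only to make the recursion well founded: `IsNext 𝕜 g e n`
-- reads `e k` for `k ≤ n` alone (`isNext_congr`).
variable (𝕜) in
noncomputable def seq (g : ℕ → E) : ℕ → E
  | 0 => g 0
  | n + 1 => Classical.epsilon (IsNext 𝕜 g (fun k => if _ : k ≤ n then seq g k else 0) n)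

theorem seq_succ : seq 𝕜 g (n + 1) = Classical.epsilon (IsNext 𝕜 g (seq 𝕜 g) n) := by
  rw [seq, isNext_congr (e' := seq 𝕜 g) fun k hk => by simp [hk]]

theorem isNext_seq_of_forall_le [CompleteSpace E]
    (hbessel : ∀ x (s : Finset ℕ), ∑ k ∈ s, ‖⟪g k, x⟫_𝕜‖ ^ 2 ≤ ‖x‖ ^ 2)
    (h : ∀ k ≤ n, ‖seq 𝕜 g k‖ = 1 ∧ residualAdj 𝕜 g (seq 𝕜 g) k (seq 𝕜 g k) = g k) :
    IsNext 𝕜 g (seq 𝕜 g) n (seq 𝕜 g (n + 1)) := by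
  rw [seq_succ]
  exact Classical.epsilon_spec
    (exists_isNext hbessel (fun k hk => (h k hk).1) (fun k hk => (h k hk).2))

theorem seq_spec [CompleteSpace E]
    (hbessel : ∀ x (s : Finset ℕ), ∑ k ∈ s, ‖⟪g k, x⟫_𝕜‖ ^ 2 ≤ ‖x‖ ^ 2) (hg : ‖g 0‖ = 1)
    (n : ℕ) : ‖seq 𝕜 g n‖ = 1 ∧ residualAdj 𝕜 g (seq 𝕜 g) n (seq 𝕜 g n) = g n := by
  induction n using Nat.strong_induction_on with
  | _ n ih =>
    cases n with
    | zero => simp [seq, residualAdj_apply, hg]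
    | succ n =>
      obtain ⟨hunit, hrel, -⟩ :=
        isNext_seq_of_forall_le (n := n) hbessel fun k hk => ih k (by omega)
      exact ⟨hunit, hrel⟩

theorem isNext_seq [CompleteSpace E]
    (hbessel : ∀ x (s : Finset ℕ), ∑ k ∈ s, ‖⟪g k, x⟫_𝕜‖ ^ 2 ≤ ‖x‖ ^ 2) (hg : ‖g 0‖ = 1)
    (n : ℕ) : IsNext 𝕜 g (seq 𝕜 g) n (seq 𝕜 g (n + 1)) :=
  isNext_seq_of_forall_le hbessel fun k _ => seq_spec hbessel hg k

theorem residual_eq_of_forall_inner_eq_zero (hrel : ∀ k, residualAdj 𝕜 g e k (e k) = g k)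
    {m : ℕ} {x z : E} (hx : residual 𝕜 g e m x = z) (hz : ∀ j ≥ m, ⟪e j, z⟫_𝕜 = 0) :
    ∀ j ≥ m, residual 𝕜 g e j x = z := by
  intro j hj
  induction j, hj using Nat.le_induction with
  | base => exact hx
  | succ j hj ih => rw [residual_succ_apply_of_rel (hrel j), ih, hz j hj, zero_smul, sub_zero]

theorem residual_apply_e_zero (hunit : ∀ k, ‖e k‖ = 1)
    (hrel : ∀ k, residualAdj 𝕜 g e k (e k) = g k) {m : ℕ} (hm : 1 ≤ m) :
    residual 𝕜 g e m (e 0) = 0 := by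
  refine residual_eq_of_forall_inner_eq_zero hrel ?_ (fun j _ => inner_zero_right _) m hm
  rw [residual_succ_apply, g_zero_eq (hrel 0)]
  simp [residual_apply, inner_self_eq_norm_sq_to_K, hunit 0]

theorem inner_g_e_zero (hunit : ∀ k, ‖e k‖ = 1) (hrel : ∀ k, residualAdj 𝕜 g e k (e k) = g k)
    {j : ℕ} (hj : 1 ≤ j) : ⟪g j, e 0⟫_𝕜 = 0 := by
  rw [inner_eq_inner_residual (hrel j), residual_apply_e_zero hunit hrel hj, inner_zero_right]

theorem eq_smul_e_zero_of_forall_inner_eq_zero [CompleteSpace E] (hunit : ∀ k, ‖e k‖ = 1)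
    (hrel : ∀ k, residualAdj 𝕜 g e k (e k) = g k) {m : ℕ} (hm : 1 ≤ m)
    (hdense : (Submodule.span 𝕜 (insert (g 0) (g '' {n | m ≤ n}))).topologicalClosure = ⊤)
    {x : E} (hx : ∀ j ≥ m, ⟪g j, x⟫_𝕜 = 0) : x = ⟪g 0, x⟫_𝕜 • e 0 := by
  rw [← sub_eq_zero]
  refine eq_zero_of_forall_inner_eq_zero_of_dense hdense ?_
  rintro _ (rfl | ⟨j, hj, rfl⟩)
  · rw [g_zero_eq (hrel 0)]
    exact inner_sub_inner_smul_self_eq_zero (hunit 0) x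
  · rw [inner_sub_right, inner_smul_right, hx j hj, inner_g_e_zero hunit hrel (hm.trans hj),
      mul_zero, sub_zero]

theorem ker_residual_le [CompleteSpace E] (hunit : ∀ k, ‖e k‖ = 1)
    (hrel : ∀ k, residualAdj 𝕜 g e k (e k) = g k) {m : ℕ} (hm : 1 ≤ m)
    (hdense : (Submodule.span 𝕜 (insert (g 0) (g '' {n | m ≤ n}))).topologicalClosure = ⊤) :
    LinearMap.ker (residual 𝕜 g e m) ≤ 𝕜 ∙ e 0 := fun x hx => by
  refine Submodule.mem_span_singleton.mpr ⟨_, (eq_smul_e_zero_of_forall_inner_eq_zero hunit hrel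
    hm hdense fun j hj => ?_).symm⟩
  rw [inner_eq_inner_residual (hrel j), residual_eq_of_forall_inner_eq_zero hrel hx
    (fun _ _ => inner_zero_right _) j hj, inner_zero_right]

theorem range_residual_sup_span_eq_top [CompleteSpace E] (hunit : ∀ k, ‖e k‖ = 1)
    (hrel : ∀ k, residualAdj 𝕜 g e k (e k) = g k)
    (hdense : (Submodule.span 𝕜 (insert (g 0) (g '' {k | n + 1 ≤ k}))).topologicalClosure = ⊤) :
    LinearMap.range (residual 𝕜 g e (n + 1)) ⊔ 𝕜 ∙ e n = ⊤ := by
  set U := Submodule.span 𝕜 (e '' Set.Iio (n + 1) ∪ g '' Set.Iio (n + 1))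
  have : FiniteDimensional 𝕜 U := FiniteDimensional.span_of_finite 𝕜
    (((Set.finite_Iio _).image e).union ((Set.finite_Iio _).image g))
  have : CompleteSpace U := FiniteDimensional.complete 𝕜 U
  have heU : ∀ k < n + 1, e k ∈ U := fun k hk => Submodule.subset_span (Or.inl ⟨k, hk, rfl⟩)
  have hgU : ∀ k < n + 1, g k ∈ U := fun k hk => Submodule.subset_span (Or.inr ⟨k, hk, rfl⟩)
  have hmapU : U.map (residual 𝕜 g e (n + 1)) ≤ U := by
    rintro _ ⟨x, hx, rfl⟩
    rw [residual_apply]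
    exact U.sub_mem hx (U.sum_mem fun k hk => U.smul_mem _ (heU k (mem_range.mp hk)))
  have horth : ∀ w ∈ Uᗮ, residual 𝕜 g e (n + 1) w = w := fun w hw => by
    rw [residual_apply, sum_eq_zero fun k hk => by
      rw [Submodule.inner_right_of_mem_orthogonal (hgU k (mem_range.mp hk)) hw, zero_smul],
      sub_zero]
  have hnot : e n ∉ U.map (residual 𝕜 g e (n + 1)) := by
    rintro ⟨x, -, hx⟩
    have := inner_residual_succ_eq_zero (hrel n) (hunit n) x
    rw [hx, inner_self_eq_norm_sq_to_K, hunit n] at this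
    simp at this
  have hU := Submodule.map_sup_span_singleton_eq_of_ker_le hmapU
    (ker_residual_le hunit hrel n.succ_pos hdense) (heU n n.lt_succ_self) hnot
  rw [eq_top_iff, ← U.sup_orthogonal_of_hasOrthogonalProjection]
  refine sup_le ?_ fun w hw => Submodule.mem_sup_left ⟨w, horth w hw⟩
  rw [← hU]
  exact sup_le_sup_right (LinearMap.map_le_range) _

theorem eq_smul_of_residualAdj_eq_zero [CompleteSpace E] (hunit : ∀ k, ‖e k‖ = 1)
    (hrel : ∀ k, residualAdj 𝕜 g e k (e k) = g k)
    (hdense : (Submodule.span 𝕜 (insert (g 0) (g '' {k | n + 1 ≤ k}))).topologicalClosure = ⊤)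
    {y : E} (hy : residualAdj 𝕜 g e (n + 1) y = 0) : y = ⟪e n, y⟫_𝕜 • e n := by
  rw [← sub_eq_zero]
  have h : y - ⟪e n, y⟫_𝕜 • e n ∈ (LinearMap.range (residual 𝕜 g e (n + 1)) ⊔ 𝕜 ∙ e n)ᗮ := by
    rw [Submodule.mem_orthogonal']
    intro u hu
    obtain ⟨_, ⟨x, rfl⟩, _, hc, rfl⟩ := Submodule.mem_sup.mp hu
    obtain ⟨c, rfl⟩ := Submodule.mem_span_singleton.mp hc
    rw [inner_add_right, inner_smul_right,
      inner_eq_zero_symm.mp (inner_sub_inner_smul_self_eq_zero (hunit n) y), inner_sub_left,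
      inner_smul_left, ← inner_residualAdj_left, hy,
      inner_residual_succ_eq_zero (hrel n) (hunit n)]
    simp
  rwa [range_residual_sup_span_eq_top hunit hrel hdense, Submodule.top_orthogonal_eq_bot,
    Submodule.mem_bot] at h

variable (𝕜) in
def IsAdmissible (e : ℕ → E) : Prop := ∀ n, ∃ r : ℝ, 0 ≤ r ∧ ⟪e n, e (n + 1)⟫_𝕜 = r

theorem eq_of_isAdmissible [CompleteSpace E] {e' : ℕ → E}
    (hstable : ∀ N, (Submodule.span 𝕜 (insert (g 0) (g '' {n | N ≤ n}))).topologicalClosure = ⊤)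
    (hunit : ∀ k, ‖e k‖ = 1) (hrel : ∀ k, residualAdj 𝕜 g e k (e k) = g k)
    (hadm : IsAdmissible 𝕜 e) (hunit' : ∀ k, ‖e' k‖ = 1)
    (hrel' : ∀ k, residualAdj 𝕜 g e' k (e' k) = g k) (hadm' : IsAdmissible 𝕜 e') : e = e' := by
  funext n
  induction n using Nat.strong_induction_on with
  | _ n ih =>
    cases n with
    | zero => rw [← g_zero_eq (hrel 0), ← g_zero_eq (hrel' 0)]
    | succ j =>
      have hA : residualAdj 𝕜 g e (j + 1) = residualAdj 𝕜 g e' (j + 1) :=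
        residualAdj_congr fun k hk => ih k hk
      have hker : residualAdj 𝕜 g e (j + 1) (e (j + 1) - e' (j + 1)) = 0 := by
        rw [map_sub, hrel, hA, hrel', sub_self]
      obtain ⟨r, hr, her⟩ := hadm j
      obtain ⟨r', hr', her'⟩ := hadm' j
      rw [← ih j j.lt_succ_self] at her'
      exact eq_of_sub_eq_smul_of_inner_nonneg (hunit j) ((hunit _).trans (hunit' _).symm)
        (eq_smul_of_residualAdj_eq_zero hunit hrel (hstable _) hker) hr hr' her her'

theorem topologicalClosure_span_tail_eq_top [CompleteSpace E] (hunit : ∀ k, ‖e k‖ = 1)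
    (hrel : ∀ k, residualAdj 𝕜 g e k (e k) = g k)
    (hstable : ∀ N, (Submodule.span 𝕜 (insert (g 0) (g '' {n | N ≤ n}))).topologicalClosure = ⊤)
    (N : ℕ) : (Submodule.span 𝕜 (e '' {n | N ≤ n})).topologicalClosure = ⊤ := by
  rw [Submodule.topologicalClosure_eq_top_iff, Submodule.eq_bot_iff]
  intro z hz
  have hze : ∀ k ≥ N, ⟪e k, z⟫_𝕜 = 0 := fun k hk =>
    Submodule.inner_right_of_mem_orthogonal (Submodule.subset_span (Set.mem_image_of_mem e hk)) hz
  obtain ⟨_, ⟨x, rfl⟩, _, hc, rfl⟩ := Submodule.mem_sup.mp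
    ((range_residual_sup_span_eq_top (n := N) hunit hrel (hstable _)).ge
      (Submodule.mem_top (x := z)))
  obtain ⟨c, rfl⟩ := Submodule.mem_span_singleton.mp hc
  have hc : c = 0 := by
    simpa [inner_add_right, inner_residual_succ_eq_zero (hrel N) (hunit N), inner_smul_right,
      inner_self_eq_norm_sq_to_K, hunit N] using hze N le_rfl
  subst hc
  rw [zero_smul, add_zero] at hze ⊢
  have hres := residual_eq_of_forall_inner_eq_zero (m := N + 1) (x := x) hrel rfl
    fun j hj => hze j (by omega)
  rw [eq_smul_e_zero_of_forall_inner_eq_zero (x := x) hunit hrel N.succ_pos (hstable _)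
    fun j hj => by
    rw [inner_eq_inner_residual (hrel j), hres j hj, hze j (by omega)], map_smul,
    residual_apply_e_zero hunit hrel N.succ_pos, smul_zero]

end Kaczmarz

open scoped ComplexInnerProductSpace

open Kaczmarz in
theorem stable_bessel_unique_admissible_kaczmarz
    {H : Type*} [NormedAddCommGroup H] [InnerProductSpace ℂ H] [CompleteSpace H]
    (g : ℕ → H)
    (hbessel : ∀ x : H, ∀ s : Finset ℕ, ∑ n ∈ s, ‖⟪g n, x⟫‖ ^ 2 ≤ ‖x‖ ^ 2)
    (hnorm : ‖g 0‖ = 1)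
    (hstable : ∀ N : ℕ,
      (Submodule.span ℂ (insert (g 0) (g '' {n | N ≤ n}))).topologicalClosure = ⊤) :
    (∃! e : ℕ → H,
      (∀ n, ‖e n‖ = 1) ∧
      (∀ n : ℕ, ∃ r : ℝ, 0 ≤ r ∧ ⟪e n, e (n + 1)⟫ = (r : ℂ)) ∧
      g 0 = e 0 ∧
      (∀ n, 0 < n → g n = e n - ∑ i ∈ Finset.range n, ⟪e i, e n⟫ • g i)) ∧
    (∀ e : ℕ → H,
      ((∀ n, ‖e n‖ = 1) ∧
       (∀ n : ℕ, ∃ r : ℝ, 0 ≤ r ∧ ⟪e n, e (n + 1)⟫ = (r : ℂ)) ∧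
       g 0 = e 0 ∧
       (∀ n, 0 < n → g n = e n - ∑ i ∈ Finset.range n, ⟪e i, e n⟫ • g i)) →
      ∀ N : ℕ, (Submodule.span ℂ (e '' {n | N ≤ n})).topologicalClosure = ⊤) := by
  have hunit n := (seq_spec hbessel hnorm n).1
  have hrel n := (seq_spec hbessel hnorm n).2
  have hadm : IsAdmissible ℂ (seq ℂ g) := fun n => (isNext_seq hbessel hnorm n).2.2
  refine ⟨⟨seq ℂ g, ⟨hunit, hadm, forall_residualAdj_apply_self_eq_iff.mp hrel⟩, ?_⟩, ?_⟩
  · rintro e ⟨hunit', hadm', hrel'⟩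
    exact (eq_of_isAdmissible hstable hunit hrel hadm hunit'
      (forall_residualAdj_apply_self_eq_iff.mpr hrel') hadm').symm
  · rintro e ⟨hunit', -, hrel'⟩
    exact topologicalClosure_span_tail_eq_top hunit'
      (forall_residualAdj_apply_self_eq_iff.mpr hrel') hstable
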